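/- Let h_k and κ_k be as in the perspective observation model, Q ∈ Mat₂(ℝ) symmetric, and y_k ∈ ℝ². Define f(E) = (1/2)‖y_k − h_k(E)‖²_Q = (1/2)(y_k − h_k(E))ᵀQ(y_k − h_k(E)). Then for η₁ ∈ se(3), the directional derivative of f at E along the curve t ↦ E·exp(tη₁) (equivalently in direction Eη₁) equals trace(A_k(E)ᵀ η₁), where A_k(E) := (κ_k⁻¹Î − κ_k⁻² Î E⁻¹ g_k (e₃⁴)ᵀ)ᵀ · Q · (y_k − h_k(E)) · g_kᵀ · E⁻ᵀ. -/

import Mathlib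

open Matrix

attribute [local instance] Matrix.normedAddCommGroup Matrix.normedSpace

/-- Membership in `𝔰𝔢(3)`. -/
def isSe3 (A : Matrix (Fin 4) (Fin 4) ℝ) : Prop :=
  (∀ i j : Fin 3, A i.castSucc j.castSucc = - A j.castSucc i.castSucc) ∧
  (∀ j : Fin 4, A 3 j = 0)

/-- `Î ∈ ℝ^{2×4}` selecting the first two coordinates. -/
noncomputable def Ihat : Matrix (Fin 2) (Fin 4) ℝ := !![1, 0, 0, 0; 0, 1, 0, 0]

/-- Third standard basis vector `e₃⁴` of `ℝ⁴`. -/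
noncomputable def e3vec : Fin 4 → ℝ := Pi.single (2 : Fin 4) 1

/-- `κ_k(E) = (e₃⁴)ᵀ E⁻¹ g_k`. -/
noncomputable def kappa (E : Matrix (Fin 4) (Fin 4) ℝ) (g : Fin 4 → ℝ) : ℝ :=
  e3vec ⬝ᵥ (E⁻¹ *ᵥ g)

/-- The perspective observation `h_k(E) = κ_k(E)⁻¹ · Î E⁻¹ g_k`. -/
noncomputable def hObs (E : Matrix (Fin 4) (Fin 4) ℝ) (g : Fin 4 → ℝ) : Fin 2 → ℝ :=
  (kappa E g)⁻¹ • ((Ihat * E⁻¹) *ᵥ g)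

/-- `f(E) = (1/2)‖y − h_k(E)‖²_Q`. -/
noncomputable def fobs (Q : Matrix (Fin 2) (Fin 2) ℝ) (y : Fin 2 → ℝ) (g : Fin 4 → ℝ)
    (E : Matrix (Fin 4) (Fin 4) ℝ) : ℝ :=
  (1 / 2 : ℝ) * ((y - hObs E g) ⬝ᵥ (Q *ᵥ (y - hObs E g)))

/-- `A_k(E) = (κ⁻¹Î − κ⁻² ÎE⁻¹g(e₃⁴)ᵀ)ᵀ · Q · (y − h_k(E)) · gᵀE⁻ᵀ`. -/
noncomputable def Ak (Q : Matrix (Fin 2) (Fin 2) ℝ) (y : Fin 2 → ℝ) (g : Fin 4 → ℝ)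
    (E : Matrix (Fin 4) (Fin 4) ℝ) : Matrix (Fin 4) (Fin 4) ℝ :=
  ((kappa E g)⁻¹ • Ihat
      - (kappa E g ^ 2)⁻¹ • Matrix.vecMulVec ((Ihat * E⁻¹) *ᵥ g) e3vec)ᵀ *
    (Q * Matrix.vecMulVec (y - hObs E g) (E⁻¹ *ᵥ g))


/-!
Write `w = E⁻¹ g`. Since `(E exp(tη))⁻¹ g = exp(-tη) w`, along the curve the point `w` moves with
velocity `-η w`, and `h_k` is the perspective projection `w ↦ (e₃ ⬝ w)⁻¹ Î w`. The chain rule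
through this projection and through the quadratic form `½‖·‖²_Q` (symmetric `Q`) gives the
derivative `(Q (y - h_k)) ⬝ (D η w)`, where `D` is the Jacobian of the projection; this is
`trace(A_kᵀ η)` because `A_k = Dᵀ Q (y - h_k) wᵀ` has rank one.
-/

section Calculus

variable {n : Type*} [Fintype n] {u v : ℝ → n → ℝ} {u' v' : n → ℝ} {t : ℝ}

theorem HasDerivAt.dotProduct (hu : HasDerivAt u u' t) (hv : HasDerivAt v v' t) :
    HasDerivAt (fun s => u s ⬝ᵥ v s) (u' ⬝ᵥ v t + u t ⬝ᵥ v') t := by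
  have h : HasDerivAt (fun s => ∑ i, u s i * v s i) (∑ i, (u' i * v t i + u t i * v' i)) t :=
    HasDerivAt.fun_sum fun i _ => (hasDerivAt_pi.1 hu i).fun_mul (hasDerivAt_pi.1 hv i)
  rw [Finset.sum_add_distrib] at h
  exact h

theorem HasDerivAt.const_mulVec {m : Type*} [Fintype m] (M : Matrix m n ℝ)
    (hu : HasDerivAt u u' t) :
    HasDerivAt (fun s => M *ᵥ u s) (M *ᵥ u') t :=
  hasDerivAt_pi.2 fun i => by
    simpa [mulVec] using (hasDerivAt_const t (M i)).dotProduct hu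

theorem HasDerivAt.half_dotProduct_mulVec_self {Q : Matrix n n ℝ} (hQ : Qᵀ = Q)
    (hu : HasDerivAt u u' t) :
    HasDerivAt (fun s => (1 / 2 : ℝ) * (u s ⬝ᵥ (Q *ᵥ u s))) ((Q *ᵥ u t) ⬝ᵥ u') t := by
  refine ((hu.dotProduct (hu.const_mulVec Q)).const_mul _).congr_deriv ?_
  have hsymm (a b : n → ℝ) : a ⬝ᵥ (Q *ᵥ b) = (Q *ᵥ a) ⬝ᵥ b := by
    rw [dotProduct_mulVec, ← mulVec_transpose, hQ]
  rw [dotProduct_comm u', hsymm]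
  ring

theorem HasDerivAt.perspective {m : Type*} [Fintype m] (c : n → ℝ) (M : Matrix m n ℝ)
    (hu : HasDerivAt u u' t) (hc : c ⬝ᵥ u t ≠ 0) :
    HasDerivAt (fun s => (c ⬝ᵥ u s)⁻¹ • (M *ᵥ u s))
      (((c ⬝ᵥ u t)⁻¹ • M - ((c ⬝ᵥ u t) ^ 2)⁻¹ • vecMulVec (M *ᵥ u t) c) *ᵥ u') t := by
  refine (HasDerivAt.smul
    (((hasDerivAt_const t c).dotProduct hu).inv hc) (hu.const_mulVec M)).congr_deriv ?_
  rw [sub_mulVec, smul_mulVec, smul_mulVec, vecMulVec_mulVec]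
  simp only [zero_dotProduct, zero_add, op_smul_eq_smul, smul_smul]
  rw [Pi.inv_apply]
  module

end Calculus

section OperatorNorm

/- The entrywise sup norm on matrices is not submultiplicative, so the derivative of the
exponential is taken for the operator norm; the resulting statement about vectors does not
depend on the choice of matrix norm. -/
attribute [-instance] Matrix.normedAddCommGroup Matrix.normedSpace
attribute [local instance] Matrix.linftyOpNormedRing Matrix.linftyOpNormedAlgebra

theorem hasDerivAt_exp_smul_mulVec {n : Type*} [Fintype n] [DecidableEq n]
    (A : Matrix n n ℝ) (v : n → ℝ) :
    HasDerivAt (fun t : ℝ => NormedSpace.exp (t • A) *ᵥ v) (A *ᵥ v) 0 := by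
  have h := hasDerivAt_exp_smul_const (𝕂 := ℝ) A (0 : ℝ)
  rw [zero_smul, NormedSpace.exp_zero, one_mul] at h
  let L : Matrix n n ℝ →ₗ[ℝ] n → ℝ := LinearMap.applyₗ v ∘ₗ Matrix.toLin'.toLinearMap
  exact (L.toContinuousLinearMap.hasFDerivAt.comp_hasDerivAt 0 h :)

end OperatorNorm

theorem Matrix.inv_mul_exp_smul_mulVec {n : Type*} [Fintype n] [DecidableEq n]
    (E A : Matrix n n ℝ) (t : ℝ) (g : n → ℝ) :
    (E * NormedSpace.exp (t • A))⁻¹ *ᵥ g = NormedSpace.exp (t • -A) *ᵥ (E⁻¹ *ᵥ g) := by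
  rw [mul_inv_rev, ← mulVec_mulVec, smul_neg, Matrix.exp_neg]

theorem Matrix.trace_transpose_mul_vecMulVec {m n : Type*} [Fintype m] [Fintype n]
    (M : Matrix m n ℝ) (Q : Matrix m m ℝ) (r : m → ℝ) (w : n → ℝ) (η : Matrix n n ℝ) :
    trace ((Mᵀ * (Q * vecMulVec r w))ᵀ * η) = (Q *ᵥ r) ⬝ᵥ (M *ᵥ (η *ᵥ w)) := by
  rw [mul_vecMulVec, mul_vecMulVec, transpose_vecMulVec, trace_mul_comm, mul_vecMulVec,
    trace_vecMulVec, mulVec_transpose, dotProduct_comm, dotProduct_mulVec, ← dotProduct_mulVec,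
    ← dotProduct_mulVec]

theorem stmt8_general (E η₁ : Matrix (Fin 4) (Fin 4) ℝ) (g : Fin 4 → ℝ) (y : Fin 2 → ℝ)
    (Q : Matrix (Fin 2) (Fin 2) ℝ) (hQ : Qᵀ = Q)
    (hκ : kappa E g ≠ 0) :
    HasDerivAt (fun t : ℝ => fobs Q y g (E * NormedSpace.exp (t • η₁)))
      (Matrix.trace ((Ak Q y g E)ᵀ * η₁)) 0 := by
  set w := E⁻¹ *ᵥ g
  have hw : NormedSpace.exp ((0 : ℝ) • -η₁) *ᵥ w = w := by
    rw [zero_smul, NormedSpace.exp_zero, one_mulVec]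
  have hκ' : e3vec ⬝ᵥ (NormedSpace.exp ((0 : ℝ) • -η₁) *ᵥ w) ≠ 0 := by rwa [hw]
  have hpersp := (hasDerivAt_exp_smul_mulVec (-η₁) w).perspective e3vec Ihat hκ'
  have hf := (hpersp.const_sub y).half_dotProduct_mulVec_self hQ
  rw [hw] at hf
  convert hf using 1
  · funext t
    rw [fobs, hObs, kappa, ← mulVec_mulVec, Matrix.inv_mul_exp_smul_mulVec]
  · rw [Ak, Matrix.trace_transpose_mul_vecMulVec, hObs, ← mulVec_mulVec, ← kappa]
    simp only [neg_mulVec, mulVec_neg, neg_neg]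
    rfl

/-- The directional derivative of `f(E) = (1/2)‖y_k − h_k(E)‖²_Q` along `t ↦ E·exp(tη₁)`
equals `trace(A_k(E)ᵀη₁)`. -/
theorem stmt8 (E η₁ : Matrix (Fin 4) (Fin 4) ℝ) (g : Fin 4 → ℝ) (y : Fin 2 → ℝ)
    (Q : Matrix (Fin 2) (Fin 2) ℝ) (hQ : Qᵀ = Q)
    (hE : IsUnit E.det) (hκ : kappa E g ≠ 0) (hη : isSe3 η₁) :
    HasDerivAt (fun t : ℝ => fobs Q y g (E * NormedSpace.exp (t • η₁)))
      (Matrix.trace ((Ak Q y g E)ᵀ * η₁)) 0 :=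
  stmt8_general E η₁ g y Q hQ hκ
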